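/- Choi's criterion: a linear map Λ : M_d(ℂ) → M_d(ℂ) is completely positive if and only if its Choi matrix (I ⊗ Λ)(|φ₊⟩⟨φ₊|) is positive semidefinite, where |φ₊⟩ = (1/√d)Σ_i |ii⟩. -/

import Mathlib

open Matrix Complex ComplexOrder

abbrev Mat (d : ℕ) := Matrix (Fin d) (Fin d) ℂ

/-- The extension `I_n ⊗ Λ` of a matrix map `Λ` by the identity on a first tensor factor. -/
def matExt {α β : Type*} [Fintype α] [Fintype β] (n : ℕ)
    (Λ : Matrix α α ℂ → Matrix β β ℂ)
    (A : Matrix (Fin n × α) (Fin n × α) ℂ) :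
    Matrix (Fin n × β) (Fin n × β) ℂ :=
  fun p q => Λ (fun k l => A (p.1, k) (q.1, l)) p.2 q.2

/-- The extension `Λ ⊗ I` of a matrix map `Λ` by the identity on a second tensor factor. -/
def extSecond {α β : Type*} [Fintype α] [Fintype β] (n : ℕ)
    (Λ : Matrix α α ℂ → Matrix β β ℂ)
    (A : Matrix (α × Fin n) (α × Fin n) ℂ) :
    Matrix (β × Fin n) (β × Fin n) ℂ :=
  fun p q => Λ (fun k l => A (k, p.2) (l, q.2)) p.1 q.1

/-- A matrix map is positive if it preserves positive semidefiniteness. -/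
def IsPosMap {α β : Type*} [Fintype α] [Fintype β]
    (Λ : Matrix α α ℂ → Matrix β β ℂ) : Prop :=
  ∀ A, A.PosSemidef → (Λ A).PosSemidef

/-- Complete positivity: every identity extension preserves positive semidefiniteness. -/
def IsCP {α β : Type*} [Fintype α] [Fintype β]
    (Λ : Matrix α α ℂ → Matrix β β ℂ) : Prop :=
  ∀ (n : ℕ) (A : Matrix (Fin n × α) (Fin n × α) ℂ),
    A.PosSemidef → (matExt n Λ A).PosSemidef

/-- Trace preservation. -/
def IsTP {α β : Type*} [Fintype α] [Fintype β]
    (Λ : Matrix α α ℂ → Matrix β β ℂ) : Prop :=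
  ∀ A, (Λ A).trace = A.trace

def IsCPTP {α β : Type*} [Fintype α] [Fintype β]
    (Λ : Matrix α α ℂ → Matrix β β ℂ) : Prop :=
  IsCP Λ ∧ IsTP Λ

/-- The trace norm `‖A‖₁ = Tr √(AᴴA)`. -/
noncomputable def traceNorm {m : Type*} [Fintype m] [DecidableEq m] (A : Matrix m m ℂ) : ℝ :=
  (((Matrix.posSemidef_conjTranspose_mul_self A).1.eigenvectorUnitary.1 *
    diagonal ((fun x : ℝ => (x : ℂ)) ∘ Real.sqrt ∘ (Matrix.posSemidef_conjTranspose_mul_self A).1.eigenvalues) *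
    (star (Matrix.posSemidef_conjTranspose_mul_self A).1.eigenvectorUnitary : Matrix m m ℂ)).trace).re

/-- The `n`-fold tensor power `Λ^{⊗n}` of a linear matrix map. -/
noncomputable def tensorPow {d : ℕ} (n : ℕ) (Λ : Mat d → Mat d)
    (A : Matrix (Fin n → Fin d) (Fin n → Fin d) ℂ) :
    Matrix (Fin n → Fin d) (Fin n → Fin d) ℂ :=
  fun p q => ∑ i : Fin n → Fin d, ∑ j : Fin n → Fin d,
    A i j * ∏ k, Λ (Matrix.single (i k) (j k) 1) (p k) (q k)

/-- The (normalized) Choi matrix `(I ⊗ Λ)(|φ₊⟩⟨φ₊|)`. -/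
noncomputable def choi {d : ℕ} (Λ : Mat d → Mat d) :
    Matrix (Fin d × Fin d) (Fin d × Fin d) ℂ :=
  fun p q => (1 / (d : ℂ)) * Λ (Matrix.single p.1 q.1 1) p.2 q.2

noncomputable def σX : Mat 2 := !![0, 1; 1, 0]
noncomputable def σY : Mat 2 := !![0, -Complex.I; Complex.I, 0]
noncomputable def σZ : Mat 2 := !![1, 0; 0, -1]

/-- The single-collision channel Λ₁. -/
noncomputable def Lam1 (ε : ℝ) (ρ : Mat 2) : Mat 2 :=
  ((1 - 2*ε : ℝ) : ℂ) • ρ + ((ε : ℝ) : ℂ) • (σZ * ρ * σZ + σX * ρ * σX)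

/-- The two-collision channel Λ₂. -/
noncomputable def Lam2 (ε : ℝ) (ρ : Mat 2) : Mat 2 :=
  (((1 - 2*ε)^2 + 4*ε^2 : ℝ) : ℂ) • ρ +
    ((2*ε*(1 - 2*ε) : ℝ) : ℂ) • (σZ * ρ * σZ + σX * ρ * σX)

/-- A general qubit Pauli map. -/
noncomputable def pauliMap (q0 qx qy qz : ℝ) (ρ : Mat 2) : Mat 2 :=
  (q0 : ℂ) • ρ + (qx : ℂ) • (σX * ρ * σX) + (qy : ℂ) • (σY * ρ * σY) + (qz : ℂ) • (σZ * ρ * σZ)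

/-- The qubit state with Bloch vector `(x, y, z)`. -/
noncomputable def bloch (x y z : ℝ) : Mat 2 :=
  (1/2 : ℂ) • !![1 + (z : ℂ), (x : ℂ) - Complex.I * (y : ℂ);
                 (x : ℂ) + Complex.I * (y : ℂ), 1 - (z : ℂ)]

/-- The coarse-grained state `λ(ρ ⊗ ρ)` of a qubit with Bloch `z`-component `rz`. -/
noncomputable def cg (rz : ℝ) : Mat 2 :=
  !![(((1 + rz)^2 / 4 : ℝ) : ℂ), 0;
     0, (((1 - rz)^2 / 4 + (1 - rz^2) / 2 : ℝ) : ℂ)]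

open scoped Kronecker

/-!
If `Λ` is completely positive, apply `I_d ⊗ Λ` to the positive rank-one matrix `|Ω⟩⟨Ω|`,
`|Ω⟩ = Σᵢ |ii⟩`: the result is `d` times the Choi matrix. Conversely, by linearity
`(I_n ⊗ Λ)(A)` has entries `Σᵢⱼ A_{(p,i),(q,j)} C_{(i,a),(j,b)}` with `C = d · choi Λ`, i.e. it is
the compression `Vᴴ (A ⊗ C) V` of a Kronecker product of two positive matrices.
-/

theorem IsLinearMap.apply_eq_sum_single {α R M : Type*} [Fintype α] [DecidableEq α]
    [Semiring R] [AddCommMonoid M] [Module R M] {Λ : Matrix α α R → M}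
    (hΛ : IsLinearMap R Λ) (A : Matrix α α R) :
    Λ A = ∑ i, ∑ j, A i j • Λ (single i j 1) := by
  have hA : A = ∑ i, ∑ j, A i j • single i j (1 : R) := by
    simpa only [smul_single, smul_eq_mul, mul_one] using matrix_eq_sum_single A
  conv_lhs => rw [hA]
  simp only [← hΛ.mk'_apply, map_sum, _root_.map_smul]

theorem Matrix.posSemidef_smul_iff {m : Type*} [Fintype m] {c : ℂ} (hc : 0 < c)
    {A : Matrix m m ℂ} : (c • A).PosSemidef ↔ A.PosSemidef :=
  ⟨fun h => by simpa [smul_smul, inv_mul_cancel₀ hc.ne'] using h.smul (Right.inv_pos.2 hc).le,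
    fun h => h.smul hc.le⟩

def choiMatrix {α β : Type*} [DecidableEq α] (Λ : Matrix α α ℂ → Matrix β β ℂ) :
    Matrix (α × β) (α × β) ℂ :=
  fun p q => Λ (single p.1 q.1 1) p.2 q.2

theorem choi_eq_smul_choiMatrix {d : ℕ} (Λ : Mat d → Mat d) :
    choi Λ = (d : ℂ)⁻¹ • choiMatrix Λ := by
  ext p q
  simp [choi, choiMatrix]

def maxEntangledVec (α : Type*) [DecidableEq α] : α × α → ℂ :=
  fun p => if p.1 = p.2 then 1 else 0

theorem matExt_maxEntangled {d : ℕ} {β : Type*} [Fintype β]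
    (Λ : Matrix (Fin d) (Fin d) ℂ → Matrix β β ℂ) :
    matExt d Λ (vecMulVec (maxEntangledVec _) (star (maxEntangledVec _))) = choiMatrix Λ := by
  ext ⟨p, a⟩ ⟨q, b⟩
  simp only [matExt, choiMatrix, vecMulVec_apply, Pi.star_apply]
  congr 1
  ext k l
  simp only [maxEntangledVec, single_apply]
  split_ifs <;> simp_all

theorem IsCP.posSemidef_choiMatrix {d : ℕ} {β : Type*} [Fintype β]
    {Λ : Matrix (Fin d) (Fin d) ℂ → Matrix β β ℂ} (h : IsCP Λ) : (choiMatrix Λ).PosSemidef :=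
  matExt_maxEntangled Λ ▸ h d _ (posSemidef_vecMulVec_self_star _)

section Converse

variable {α β : Type*} [Fintype α] [Fintype β] [DecidableEq α]

theorem matExt_apply {n : ℕ} {Λ : Matrix α α ℂ → Matrix β β ℂ}
    (hΛ : IsLinearMap ℂ Λ) (A : Matrix (Fin n × α) (Fin n × α) ℂ) (p q : Fin n) (a b : β) :
    matExt n Λ A (p, a) (q, b) = ∑ i, ∑ j, A (p, i) (q, j) * choiMatrix Λ (i, a) (j, b) := by
  simp [matExt, hΛ.apply_eq_sum_single (fun k l => A (p, k) (q, l)), Matrix.sum_apply, choiMatrix]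

/-- The matrix `V` with `V |p, a⟩ = Σᵢ |p, i⟩ ⊗ |i, a⟩`. -/
def contractionMatrix (n : ℕ) (α β : Type*) [DecidableEq α] [DecidableEq β] :
    Matrix ((Fin n × α) × (α × β)) (Fin n × β) ℂ :=
  of fun x y => if x.1.1 = y.1 ∧ x.1.2 = x.2.1 ∧ x.2.2 = y.2 then 1 else 0

theorem matExt_eq_conjTranspose_mul_kronecker_mul [DecidableEq β] {n : ℕ}
    {Λ : Matrix α α ℂ → Matrix β β ℂ} (hΛ : IsLinearMap ℂ Λ)
    (A : Matrix (Fin n × α) (Fin n × α) ℂ) :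
    matExt n Λ A =
      (contractionMatrix n α β)ᴴ * (A ⊗ₖ choiMatrix Λ) * contractionMatrix n α β := by
  ext ⟨p, a⟩ ⟨q, b⟩
  rw [matExt_apply hΛ, Finset.sum_comm]
  simp [contractionMatrix, mul_apply, Fintype.sum_prod_type, ite_and, apply_ite (starRingEnd ℂ)]

theorem isCP_of_posSemidef_choiMatrix {Λ : Matrix α α ℂ → Matrix β β ℂ}
    (hΛ : IsLinearMap ℂ Λ) (hC : (choiMatrix Λ).PosSemidef) : IsCP Λ := by
  classical
  intro n A hA
  rw [matExt_eq_conjTranspose_mul_kronecker_mul hΛ]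
  exact (hA.kronecker hC).conjTranspose_mul_mul_same _

end Converse

/-- Choi's criterion: a linear map `Λ : M_d(ℂ) → M_d(ℂ)` is completely
positive iff its Choi matrix `(I ⊗ Λ)(|φ₊⟩⟨φ₊|)` is positive semidefinite. -/
theorem choi_criterion {d : ℕ} (hd : 0 < d)
    (Λ : Mat d → Mat d) (hlin : IsLinearMap ℂ Λ) :
    IsCP Λ ↔ (choi Λ).PosSemidef := by
  have hd' : (0 : ℂ) < (d : ℂ)⁻¹ := Right.inv_pos.2 (by exact_mod_cast hd)
  rw [choi_eq_smul_choiMatrix, posSemidef_smul_iff hd']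
  exact ⟨IsCP.posSemidef_choiMatrix, isCP_of_posSemidef_choiMatrix hlin⟩
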